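/- Let r, x, y, z be nonnegative integers satisfying x + y + z ≥ r, x + y ≤ r − 1, x + y + z ≤ 2r − 2, y + z ≥ r and x + z ≥ r. Then ∑_{i=r−y}^{r−1} C(z,i) ≤ ∑_{i=r−x−y}^{r−x−1} C(z,i), where the binomial coefficient C(z,i) is taken to be 0 whenever i < 0 or i > z. -/

import Mathlib

/-!
Let `W(s) = windowSum z y s = ∑_{i=s}^{s+y-1} C(z,i)`. Since `W(s+1) - W(s) = C(z,s+y) - C(z,s)`,
the unimodality of `C(z,·)` makes `W` increase while `2s + y ≤ z` and decrease once
`z ≤ 2s + y`, and `C(z,i) = C(z,z-i)` gives `W(s) = W(z+1-y-s)`. Under `x + y + z + 2 ≤ 2r` the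
window starting at `r - y` lies to the right of the centre; either the window starting at
`r - x - y` does too, and `W` decreases from it to `r - y`, or it lies to the left, and `W`
increases to it from the mirror image `z + 1 - r` of `r - y`. That mirror image may be negative,
so `s` ranges over `ℤ`.
-/

namespace Nat

theorem choose_le_choose_of_le_of_add_le {n k l : ℕ} (hkl : k ≤ l) (h : k + l ≤ n) :
    n.choose k ≤ n.choose l := by
  have mono : MonotoneOn n.choose (Set.Iic (n / 2)) :=
    monotoneOn_of_le_add_one Set.ordConnected_Iic fun a _ _ ha =>
      choose_le_succ_of_lt_half_left (by simp only [Set.mem_Iic] at ha; omega)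
  rcases le_or_gt l (n / 2) with hl | hl
  · exact mono (by simp only [Set.mem_Iic]; omega) hl hkl
  · rw [← choose_symm (by omega : l ≤ n)]
    exact mono (by simp only [Set.mem_Iic]; omega) (by simp only [Set.mem_Iic]; omega) (by omega)

end Nat

def extChoose (n : ℕ) (k : ℤ) : ℕ := if 0 ≤ k then n.choose k.toNat else 0

section extChoose

variable {n : ℕ} {a b : ℤ}

@[simp]
lemma extChoose_natCast (n k : ℕ) : extChoose n k = n.choose k := by
  simp [extChoose]

lemma extChoose_of_neg (hb : b < 0) : extChoose n b = 0 :=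
  if_neg (by omega)

lemma extChoose_of_lt (hb : n < b) : extChoose n b = 0 := by
  rw [extChoose, if_pos (by omega)]
  exact Nat.choose_eq_zero_of_lt (by omega)

lemma extChoose_sub (n : ℕ) (k : ℤ) : extChoose n (n - k) = extChoose n k := by
  rcases lt_or_ge k 0 with hk | hk
  · rw [extChoose_of_neg hk, extChoose_of_lt (by omega)]
  rcases lt_or_ge (n : ℤ) k with hnk | hnk
  · rw [extChoose_of_lt hnk, extChoose_of_neg (by omega)]
  lift k to ℕ using hk
  rw [← Nat.cast_sub (by omega), extChoose_natCast, extChoose_natCast,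
    Nat.choose_symm (by omega)]

lemma extChoose_le_extChoose_of_le_of_add_le (hab : a ≤ b) (h : a + b ≤ n) :
    extChoose n a ≤ extChoose n b := by
  rcases lt_or_ge a 0 with ha | ha
  · simp [extChoose_of_neg ha]
  lift a to ℕ using ha
  lift b to ℕ using (by omega)
  rw [extChoose_natCast, extChoose_natCast]
  exact Nat.choose_le_choose_of_le_of_add_le (by omega) (by omega)

lemma extChoose_le_extChoose_of_le_of_le_add (hba : b ≤ a) (h : n ≤ a + b) :
    extChoose n a ≤ extChoose n b := by
  rw [← extChoose_sub n a, ← extChoose_sub n b]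
  exact extChoose_le_extChoose_of_le_of_add_le (by omega) (by omega)

end extChoose

def windowSum (n y : ℕ) (s : ℤ) : ℕ := ∑ k ∈ Finset.range y, extChoose n (s + k)

section windowSum

variable (n y : ℕ)

lemma sum_Ico_choose_eq_windowSum (a : ℕ) :
    ∑ i ∈ Finset.Ico a (a + y), n.choose i = windowSum n y a := by
  rw [Finset.sum_Ico_eq_sum_range, Nat.add_sub_cancel_left, windowSum]
  exact Finset.sum_congr rfl fun k _ => by rw [← extChoose_natCast, Nat.cast_add]

lemma windowSum_add_one (s : ℤ) :
    windowSum n y (s + 1) + extChoose n s = windowSum n y s + extChoose n (s + y) := by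
  have shifted := Finset.sum_range_succ' (fun k : ℕ => extChoose n (s + k)) y
  have cast_succ (k : ℕ) : s + ((k + 1 : ℕ) : ℤ) = s + 1 + k := by push_cast; ring
  rw [Finset.sum_range_succ] at shifted
  simp only [windowSum, cast_succ, Nat.cast_zero, add_zero] at shifted ⊢
  omega

lemma windowSum_reflect (s : ℤ) : windowSum n y (n + 1 - y - s) = windowSum n y s := by
  rw [windowSum, ← Finset.sum_range_reflect]
  refine Finset.sum_congr rfl fun k hk => ?_
  rw [Finset.mem_range] at hk
  rw [← extChoose_sub n (s + k)]
  congr 1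
  omega

lemma monotoneOn_windowSum : MonotoneOn (windowSum n y) {s | 2 * s + y ≤ n + 2} := by
  refine monotoneOn_of_le_add_one ⟨fun a _ b hb c hc => ?_⟩ fun s _ _ hs => ?_
  · simp only [Set.mem_ofPred_eq, Set.mem_Icc] at hb hc ⊢
    omega
  · simp only [Set.mem_ofPred_eq] at hs
    have step := windowSum_add_one n y s
    have edge := extChoose_le_extChoose_of_le_of_add_le (n := n) (a := s) (b := s + y)
      (by omega) (by omega)
    omega

lemma antitoneOn_windowSum : AntitoneOn (windowSum n y) {s | n ≤ 2 * s + y} := by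
  refine antitoneOn_of_add_one_le ⟨fun a ha b _ c hc => ?_⟩ fun s _ hs _ => ?_
  · simp only [Set.mem_ofPred_eq, Set.mem_Icc] at ha hc ⊢
    omega
  · simp only [Set.mem_ofPred_eq] at hs
    have step := windowSum_add_one n y s
    have edge := extChoose_le_extChoose_of_le_of_le_add (n := n) (a := s + y) (b := s)
      (by omega) (by omega)
    omega

end windowSum

theorem sum_choose_shift_le_general
    (r x y z : ℕ)
    (h2 : x + y + 1 ≤ r) (h3 : x + y + z + 2 ≤ 2 * r) :
    ∑ i ∈ Finset.Icc (r - y) (r - 1), z.choose i ≤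
      ∑ i ∈ Finset.Icc (r - x - y) (r - x - 1), z.choose i := by
  rw [show Finset.Icc (r - y) (r - 1) = Finset.Ico (r - y) (r - y + y) by ext; simp; omega,
    show Finset.Icc (r - x - y) (r - x - 1) = Finset.Ico (r - x - y) (r - x - y + y) by
      ext; simp; omega,
    sum_Ico_choose_eq_windowSum, sum_Ico_choose_eq_windowSum]
  push_cast [show y ≤ r by omega, show x + y ≤ r by omega, Nat.sub_sub]
  rcases le_or_gt (z : ℤ) (2 * (r - (x + y)) + y) with hz | hz
  · exact antitoneOn_windowSum z y hz (by simp only [Set.mem_ofPred_eq]; omega) (by omega)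
  · rw [← windowSum_reflect z y (r - y)]
    exact monotoneOn_windowSum z y (by simp only [Set.mem_ofPred_eq]; omega)
      (by simp only [Set.mem_ofPred_eq]; omega) (by omega)

/-- For nonnegative integers `r, x, y, z` with `x+y+z ≥ r`,
`x+y ≤ r−1`, `x+y+z ≤ 2r−2`, `y+z ≥ r` and `x+z ≥ r`, we have
`∑_{i=r−y}^{r−1} C(z,i) ≤ ∑_{i=r−x−y}^{r−x−1} C(z,i)` (note `Nat.choose z i = 0` for
`i > z`, and all the index bounds here are nonnegative). -/
theorem sum_choose_shift_le
    (r x y z : ℕ)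
    (h1 : r ≤ x + y + z) (h2 : x + y + 1 ≤ r) (h3 : x + y + z + 2 ≤ 2 * r)
    (h4 : r ≤ y + z) (h5 : r ≤ x + z) :
    ∑ i ∈ Finset.Icc (r - y) (r - 1), z.choose i ≤
      ∑ i ∈ Finset.Icc (r - x - y) (r - x - 1), z.choose i :=
  sum_choose_shift_le_general r x y z h2 h3
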